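/- Let (X,r) be a nondegenerate involutive solution. Then the retraction ([X], r_{[X]}), defined on classes [x] (where x∼y iff λ_x=λ_y) by r_{[X]}([x],[y]) = ([λ_x(y)], [ρ_y(x)]), is again a nondegenerate involutive solution. Moreover if (X,r) is square-free then so is ([X], r_{[X]}), and if (X,r) satisfies lri then so does ([X], r_{[X]}). -/

import Mathlib

/-- The quadratic map `r(x,y) = (λ_x(y), ρ_y(x))`. -/
def ybMap {X : Type*} (lam rho : X → X → X) : X × X → X × X :=
  fun p => (lam p.1 p.2, rho p.2 p.1)

/-- `r¹² = r × id` on `X × X × X`. -/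
def ybR12 {X : Type*} (lam rho : X → X → X) : X × X × X → X × X × X :=
  fun p => (lam p.1 p.2.1, rho p.2.1 p.1, p.2.2)

/-- `r²³ = id × r` on `X × X × X`. -/
def ybR23 {X : Type*} (lam rho : X → X → X) : X × X × X → X × X × X :=
  fun p => (p.1, lam p.2.1 p.2.2, rho p.2.2 p.2.1)

/-- The braid (Yang–Baxter) relation `r¹²r²³r¹² = r²³r¹²r²³`. -/
def YbBraided {X : Type*} (lam rho : X → X → X) : Prop :=
  ybR12 lam rho ∘ ybR23 lam rho ∘ ybR12 lam rho
    = ybR23 lam rho ∘ ybR12 lam rho ∘ ybR23 lam rho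

/-- `r` is involutive: `r ∘ r = id`. -/
def YbInvolutive {X : Type*} (lam rho : X → X → X) : Prop :=
  ∀ p, ybMap lam rho (ybMap lam rho p) = p

/-- Nondegeneracy: all `λ_x` and `ρ_x` are bijective. -/
def YbNondeg {X : Type*} (lam rho : X → X → X) : Prop :=
  (∀ x, Function.Bijective (lam x)) ∧ (∀ x, Function.Bijective (rho x))

/-- Condition lri: `ρ_x(λ_x(y)) = y = λ_x(ρ_x(y))`. -/
def YbLri {X : Type*} (lam rho : X → X → X) : Prop :=
  ∀ x y, rho x (lam x y) = y ∧ lam x (rho x y) = y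

/-- Square-free: `r(x,x) = (x,x)`. -/
def YbSquareFree {X : Type*} (lam rho : X → X → X) : Prop :=
  ∀ x, lam x x = x ∧ rho x x = x

/-- The retraction equivalence: `x ∼ y` iff `λ_x = λ_y`. -/
def lamSetoid {X : Type*} (lam : X → X → X) : Setoid X where
  r x y := lam x = lam y
  iseqv := ⟨fun _ => rfl, Eq.symm, Eq.trans⟩

/-!
The retraction is well defined because `λ_a = λ_b` forces `ρ_a = ρ_b`: for any `m`, pick `t` fixed
by `λ_{ρ_a m}` and put `u := λ_a t`; the braid relation gives `λ_m u = m`, hence `ρ_u m = u` by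
involutivity, so `m` is the unique preimage of `u` under `ρ_u`. As `u` depends on `a` only through
`λ_a`, the same recipe applied to `b` and the preimage of `ρ_a m` under `ρ_b` lands on `m` again.

The other well-definedness and injectivity statements on classes reduce to the cancellation law
`λ_{λ_z p} = λ_{λ_z p'} → λ_p = λ_{p'}`, which follows from `λ_z λ_p = λ_{λ_z p} λ_{ρ_p z}`.
Every statement about `ρ` is obtained from the one about `λ` for the flipped solution `(ρ, λ)`.
Once the operations descend to classes, the defining identities descend along the surjection
`X → [X]`.
-/

open Function

section Flip

variable {X : Type*} {lam rho : X → X → X}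

theorem YbBraided.swap (hbr : YbBraided lam rho) : YbBraided rho lam := by
  funext ⟨x, y, z⟩
  have h := congrFun hbr (z, y, x)
  simp only [ybR12, ybR23, comp_apply, Prod.mk.injEq] at h ⊢
  exact ⟨h.2.2.symm, h.2.1.symm, h.1.symm⟩

theorem YbInvolutive.swap (hinv : YbInvolutive lam rho) : YbInvolutive rho lam := by
  intro ⟨x, y⟩
  have h := hinv (y, x)
  simp only [ybMap, Prod.mk.injEq] at h ⊢
  exact ⟨h.2, h.1⟩

theorem YbNondeg.swap (hnd : YbNondeg lam rho) : YbNondeg rho lam :=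
  ⟨hnd.2, hnd.1⟩

theorem YbBraided.lam_lam (hbr : YbBraided lam rho) (x y z : X) :
    lam (lam x y) (lam (rho y x) z) = lam x (lam y z) :=
  congrArg Prod.fst (congrFun hbr (x, y, z))

theorem YbInvolutive.lam_lam_rho (hinv : YbInvolutive lam rho) (x y : X) :
    lam (lam x y) (rho y x) = x :=
  congrArg Prod.fst (hinv (x, y))

theorem YbInvolutive.rho_rho_lam (hinv : YbInvolutive lam rho) (x y : X) :
    rho (rho y x) (lam x y) = y :=
  hinv.swap.lam_lam_rho y x

end Flip

section Retraction

variable {X : Type*} {lam rho : X → X → X}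

theorem lam_lam_eq_self_of_lam_rho_eq_self (hinv : YbInvolutive lam rho)
    (hbr : YbBraided lam rho) {a m t : X} (ht : lam (rho a m) t = rho a m) :
    lam m (lam a t) = m :=
  calc lam m (lam a t)
      = lam (lam (lam m a) (rho a m)) (lam (rho (rho a m) (lam m a)) t) := by
        rw [hinv.lam_lam_rho, hinv.rho_rho_lam]
    _ = lam (lam m a) (rho a m) := by rw [hbr.lam_lam, ht]
    _ = m := hinv.lam_lam_rho m a

theorem rho_eq_self_of_lam_eq_self (hinv : YbInvolutive lam rho) {m u : X}
    (hl : Injective (lam m)) (h : lam m u = m) : rho u m = u := by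
  have hm := hinv.lam_lam_rho m u
  rw [h] at hm
  exact hl (hm.trans h.symm)

theorem rho_eq_of_lam_eq (hnd : YbNondeg lam rho) (hinv : YbInvolutive lam rho)
    (hbr : YbBraided lam rho) {a b : X} (h : lam a = lam b) : rho a = rho b := by
  funext m
  obtain ⟨t, ht⟩ := (hnd.1 (rho a m)).2 (rho a m)
  obtain ⟨m', hm'⟩ := (hnd.2 b).2 (rho a m)
  have hm : lam m (lam a t) = m := lam_lam_eq_self_of_lam_rho_eq_self hinv hbr ht
  have hm'' : lam m' (lam a t) = m' := by
    rw [h]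
    exact lam_lam_eq_self_of_lam_rho_eq_self hinv hbr (hm' ▸ ht)
  have hmm' : m = m' := (hnd.2 (lam a t)).1 <|
    (rho_eq_self_of_lam_eq_self hinv (hnd.1 m).1 hm).trans
      (rho_eq_self_of_lam_eq_self hinv (hnd.1 m').1 hm'').symm
  rw [← hm', hmm']

theorem lam_eq_iff_rho_eq (hnd : YbNondeg lam rho) (hinv : YbInvolutive lam rho)
    (hbr : YbBraided lam rho) {a b : X} : lam a = lam b ↔ rho a = rho b :=
  ⟨rho_eq_of_lam_eq hnd hinv hbr, rho_eq_of_lam_eq hnd.swap hinv.swap hbr.swap⟩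

theorem lam_eq_of_lam_lam_eq (hl : ∀ x, Injective (lam x)) (hinv : YbInvolutive lam rho)
    (hbr : YbBraided lam rho) {z p p' : X} (h : lam (lam z p) = lam (lam z p')) :
    lam p = lam p' := by
  have hρ : rho p z = rho p' z := hl (lam z p) <| by
    rw [hinv.lam_lam_rho z p, h, hinv.lam_lam_rho z p']
  funext w
  apply hl z
  rw [← hbr.lam_lam z p w, ← hbr.lam_lam z p' w, h, hρ]

theorem lam_eq_of_lam_rho_eq (hnd : YbNondeg lam rho) (hinv : YbInvolutive lam rho)
    (hbr : YbBraided lam rho) {y a b : X} (h : lam (rho y a) = lam (rho y b)) :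
    lam a = lam b :=
  (lam_eq_iff_rho_eq hnd hinv hbr).2 <| lam_eq_of_lam_lam_eq (fun x => (hnd.2 x).1)
    hinv.swap hbr.swap ((lam_eq_iff_rho_eq hnd hinv hbr).1 h)

theorem lam_lam_congr (hnd : YbNondeg lam rho) (hinv : YbInvolutive lam rho)
    (hbr : YbBraided lam rho) {a a' b b' : X} (ha : lam a = lam a') (hb : lam b = lam b') :
    lam (lam a b) = lam (lam a' b') := by
  rw [← ha]
  have hρ : rho b = rho b' := (lam_eq_iff_rho_eq hnd hinv hbr).1 hb
  refine (lam_eq_iff_rho_eq hnd hinv hbr).2 <| lam_eq_of_lam_lam_eq (fun x => (hnd.2 x).1)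
    hinv.swap hbr.swap (z := rho b a) ?_
  rw [hinv.rho_rho_lam a b, hρ, hinv.rho_rho_lam a b']

theorem lam_rho_congr (hnd : YbNondeg lam rho) (hinv : YbInvolutive lam rho)
    (hbr : YbBraided lam rho) {a a' b b' : X} (ha : lam a = lam a') (hb : lam b = lam b') :
    lam (rho a b) = lam (rho a' b') := by
  rw [← (lam_eq_iff_rho_eq hnd hinv hbr).1 ha]
  refine lam_eq_of_lam_lam_eq (fun x => (hnd.1 x).1) hinv hbr (z := lam b a) ?_
  rw [hinv.lam_lam_rho b a, hb, hinv.lam_lam_rho b' a]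

end Retraction

section Image

variable {X Y : Type*} {lam rho : X → X → X} {lamY rhoY : Y → Y → Y} {π : X → Y}

theorem YbBraided.of_surjective (hbr : YbBraided lam rho) (hπ : Surjective π)
    (hlam : ∀ x y, lamY (π x) (π y) = π (lam x y))
    (hrho : ∀ x y, rhoY (π x) (π y) = π (rho x y)) : YbBraided lamY rhoY := by
  funext ⟨a, b, c⟩
  obtain ⟨x, rfl⟩ := hπ a
  obtain ⟨y, rfl⟩ := hπ b
  obtain ⟨z, rfl⟩ := hπ c
  have h := congrFun hbr (x, y, z)
  simp only [ybR12, ybR23, comp_apply, hlam, hrho] at h ⊢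
  exact congrArg (Prod.map π (Prod.map π π)) h

theorem YbInvolutive.of_surjective (hinv : YbInvolutive lam rho) (hπ : Surjective π)
    (hlam : ∀ x y, lamY (π x) (π y) = π (lam x y))
    (hrho : ∀ x y, rhoY (π x) (π y) = π (rho x y)) : YbInvolutive lamY rhoY := by
  intro ⟨a, b⟩
  obtain ⟨x, rfl⟩ := hπ a
  obtain ⟨y, rfl⟩ := hπ b
  have h := hinv (x, y)
  simp only [ybMap, hlam, hrho] at h ⊢
  exact congrArg (Prod.map π π) h

theorem YbNondeg.of_surjective (hnd : YbNondeg lam rho) (hπ : Surjective π)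
    (hlam : ∀ x y, lamY (π x) (π y) = π (lam x y))
    (hrho : ∀ x y, rhoY (π x) (π y) = π (rho x y))
    (hlam_inj : ∀ x a b, π (lam x a) = π (lam x b) → π a = π b)
    (hrho_inj : ∀ y a b, π (rho y a) = π (rho y b) → π a = π b) : YbNondeg lamY rhoY := by
  refine ⟨hπ.forall.2 fun x => ⟨?_, ?_⟩, hπ.forall.2 fun y => ⟨?_, ?_⟩⟩
  · refine hπ.forall₂.2 fun a b h => hlam_inj x a b ?_
    rwa [hlam, hlam] at h
  · refine hπ.forall.2 fun w => ?_
    obtain ⟨v, rfl⟩ := (hnd.1 x).2 w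
    exact ⟨π v, hlam x v⟩
  · refine hπ.forall₂.2 fun a b h => hrho_inj y a b ?_
    rwa [hrho, hrho] at h
  · refine hπ.forall.2 fun w => ?_
    obtain ⟨v, rfl⟩ := (hnd.2 y).2 w
    exact ⟨π v, hrho y v⟩

theorem YbSquareFree.of_surjective (hsf : YbSquareFree lam rho) (hπ : Surjective π)
    (hlam : ∀ x y, lamY (π x) (π y) = π (lam x y))
    (hrho : ∀ x y, rhoY (π x) (π y) = π (rho x y)) : YbSquareFree lamY rhoY :=
  hπ.forall.2 fun x => by rw [hlam, hrho, (hsf x).1, (hsf x).2]; exact ⟨rfl, rfl⟩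

theorem YbLri.of_surjective (hlri : YbLri lam rho) (hπ : Surjective π)
    (hlam : ∀ x y, lamY (π x) (π y) = π (lam x y))
    (hrho : ∀ x y, rhoY (π x) (π y) = π (rho x y)) : YbLri lamY rhoY :=
  hπ.forall₂.2 fun x y => by
    rw [hlam, hrho, hrho, hlam, (hlri x y).1, (hlri x y).2]
    exact ⟨rfl, rfl⟩

end Image

/-- the retraction of a nondegenerate involutive solution is again a
nondegenerate involutive solution; it is square-free if `(X,r)` is, and satisfies lri
if `(X,r)` does. -/
theorem retraction_is_solution {X : Type*} (lam rho : X → X → X)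
    (hnd : YbNondeg lam rho) (hinv : YbInvolutive lam rho) (hbr : YbBraided lam rho) :
    ∃ lamQ rhoQ : Quotient (lamSetoid lam) → Quotient (lamSetoid lam) → Quotient (lamSetoid lam),
      (∀ x y : X, lamQ (Quotient.mk (lamSetoid lam) x) (Quotient.mk (lamSetoid lam) y)
          = Quotient.mk (lamSetoid lam) (lam x y)) ∧
      (∀ x y : X, rhoQ (Quotient.mk (lamSetoid lam) y) (Quotient.mk (lamSetoid lam) x)
          = Quotient.mk (lamSetoid lam) (rho y x)) ∧
      YbBraided lamQ rhoQ ∧ YbInvolutive lamQ rhoQ ∧ YbNondeg lamQ rhoQ ∧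
      (YbSquareFree lam rho → YbSquareFree lamQ rhoQ) ∧
      (YbLri lam rho → YbLri lamQ rhoQ) := by
  let lamQ := Quotient.map₂ (sa := lamSetoid lam) (sb := lamSetoid lam) (sc := lamSetoid lam) lam
    fun _ _ ha _ _ hb => lam_lam_congr hnd hinv hbr ha hb
  let rhoQ := Quotient.map₂ (sa := lamSetoid lam) (sb := lamSetoid lam) (sc := lamSetoid lam) rho
    fun _ _ ha _ _ hb => lam_rho_congr hnd hinv hbr ha hb
  have hlam : ∀ x y, lamQ ⟦x⟧ ⟦y⟧ = ⟦lam x y⟧ := fun _ _ => rfl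
  have hrho : ∀ x y, rhoQ ⟦x⟧ ⟦y⟧ = ⟦rho x y⟧ := fun _ _ => rfl
  have hπ := Quotient.mk_surjective (s := lamSetoid lam)
  refine ⟨lamQ, rhoQ, hlam, fun x y => hrho y x, hbr.of_surjective hπ hlam hrho,
    hinv.of_surjective hπ hlam hrho, hnd.of_surjective hπ hlam hrho ?_ ?_,
    fun hsf => hsf.of_surjective hπ hlam hrho, fun hlri => hlri.of_surjective hπ hlam hrho⟩
  · exact fun x a b h => Quotient.sound <|
      lam_eq_of_lam_lam_eq (fun x => (hnd.1 x).1) hinv hbr (Quotient.exact h)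
  · exact fun y a b h => Quotient.sound <| lam_eq_of_lam_rho_eq hnd hinv hbr (Quotient.exact h)
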